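/- arXiv:2305.15790 — 2 statements merged into one kernel-verified Lean document; each statement's English description precedes it below -/
import Mathlib

section
/- Removing the minimum-weight edge from each cycle of a 3-cycle cover (all cycles of length at least 3) with nonnegative edge weights, and joining the resulting paths arbitrarily with nonnegative-weight edges, yields a Hamiltonian path whose weight is at least two thirds of the weight of the 3-cycle cover. -/
/-- The list of consecutive edges of a path given as a list of vertices. -/
def pathEdges {V : Type*} (l : List V) : List (V × V) := l.zip l.tail

/-- The total weight of a list of edges. -/
def edgesWeight {V : Type*} (w : V → V → ℝ) (E : List (V × V)) : ℝ :=
  (E.map fun p => w p.1 p.2).sum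

/-- The total weight of a path given as a list of vertices. -/
def pathWeight {V : Type*} (w : V → V → ℝ) (l : List V) : ℝ :=
  edgesWeight w (pathEdges l)

/-- The edges of a cycle given as a list of vertices (consecutive edges plus the closing edge). -/
def cycleEdges {V : Type*} (l : List V) : List (V × V) := pathEdges (l ++ l.take 1)

/-- The total weight of a cycle given as a list of vertices. -/
def cycleWeight {V : Type*} (w : V → V → ℝ) (l : List V) : ℝ :=
  edgesWeight w (cycleEdges l)

/-- A list of vertices is Hamiltonian (a listing of all vertices, each exactly once). -/
def IsHamList {V : Type*} [Fintype V] (l : List V) : Prop := l.Nodup ∧ ∀ v : V, v ∈ l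

/-- A list of edges is a matching: all the endpoint vertices are pairwise distinct. -/
def IsMatchingList {V : Type*} (E : List (V × V)) : Prop :=
  ((E.map Prod.fst) ++ (E.map Prod.snd)).Nodup

/-- A 3-cycle cover: a list of vertex-disjoint cycles, each of length at least 3, covering all
vertices. -/
def Is3CycleCover {V : Type*} [Fintype V] (CC : List (List V)) : Prop :=
  CC.flatten.Nodup ∧ (∀ v : V, v ∈ CC.flatten) ∧ ∀ c ∈ CC, 3 ≤ c.length

section Aux

variable {V : Type*}

@[simp] lemma pathWeight_nil (w : V → V → ℝ) : pathWeight w [] = 0 := rfl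
@[simp] lemma pathWeight_single (w : V → V → ℝ) (x : V) : pathWeight w [x] = 0 := rfl
@[simp] lemma pathWeight_cons_cons (w : V → V → ℝ) (x y : V) (l : List V) :
    pathWeight w (x :: y :: l) = w x y + pathWeight w (y :: l) := rfl

lemma pathWeight_nonneg (w : V → V → ℝ) (hw : ∀ u v, 0 ≤ w u v) (l : List V) :
    0 ≤ pathWeight w l := by
  apply List.sum_nonneg
  intro x hx
  simp only [List.mem_map] at hx
  obtain ⟨p, _, rfl⟩ := hx
  exact hw _ _

lemma pathWeight_append (w : V → V → ℝ) (hw : ∀ u v, 0 ≤ w u v) :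
    ∀ a b : List V, pathWeight w a + pathWeight w b ≤ pathWeight w (a ++ b) := by
  intro a
  induction a with
  | nil => intro b; simp
  | cons x a ih =>
    intro b
    cases a with
    | nil =>
      cases b with
      | nil => simp
      | cons y b =>
        simp only [List.singleton_append, pathWeight_single, pathWeight_cons_cons, zero_add]
        linarith [hw x y]
    | cons y a =>
      have := ih b
      simp only [List.cons_append, pathWeight_cons_cons] at *
      linarith

lemma pathWeight_flatten (w : V → V → ℝ) (hw : ∀ u v, 0 ≤ w u v) (L : List (List V)) :
    (L.map (pathWeight w)).sum ≤ pathWeight w L.flatten := by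
  induction L with
  | nil => simp
  | cons l L ih =>
    simp only [List.map_cons, List.sum_cons, List.flatten_cons]
    calc pathWeight w l + (L.map (pathWeight w)).sum
        ≤ pathWeight w l + pathWeight w L.flatten := by linarith
      _ ≤ pathWeight w (l ++ L.flatten) := pathWeight_append w hw _ _

lemma cycleEdges_length (l : List V) (hl : l ≠ []) : (cycleEdges l).length = l.length := by
  unfold cycleEdges pathEdges
  rw [List.length_zip]
  cases l with
  | nil => simp at hl
  | cons x l => simp [Nat.min_def]

lemma cycleWeight_nonneg (w : V → V → ℝ) (hw : ∀ u v, 0 ≤ w u v) (c : List V) :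
    0 ≤ cycleWeight w c := by
  apply List.sum_nonneg
  intro x hx
  simp only [List.mem_map] at hx
  obtain ⟨p, _, rfl⟩ := hx
  exact hw _ _

lemma exists_small_edge (w : V → V → ℝ) (hw : ∀ u v, 0 ≤ w u v) (c : List V)
    (hc : 3 ≤ c.length) : ∃ e ∈ cycleEdges c, w e.1 e.2 ≤ cycleWeight w c / 3 := by
  have hcne : c ≠ [] := by intro h; simp [h] at hc
  have hlen : (cycleEdges c).length = c.length := cycleEdges_length c hcne
  have hS : (0:ℝ) ≤ cycleWeight w c := cycleWeight_nonneg w hw c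
  by_contra hcon
  push_neg at hcon
  set S := cycleWeight w c with hSdef
  obtain ⟨e, E', hE⟩ : ∃ e E', cycleEdges c = e :: E' := by
    cases h : cycleEdges c with
    | nil => rw [h] at hlen; simp at hlen; omega
    | cons e E' => exact ⟨e, E', rfl⟩
  have h1 : S / 3 < w e.1 e.2 := hcon e (by rw [hE]; exact List.mem_cons_self (a := e) (l := E'))
  have h2 := List.card_nsmul_le_sum (E'.map fun p => w p.1 p.2) (S / 3) (by
    intro x hx
    simp only [List.mem_map] at hx
    obtain ⟨p, hp, rfl⟩ := hx
    exact (hcon p (by rw [hE]; exact List.mem_cons_of_mem e hp)).le)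
  rw [List.length_map, nsmul_eq_mul] at h2
  have hSsum : S = w e.1 e.2 + (E'.map fun p => w p.1 p.2).sum := by
    rw [hSdef]; unfold cycleWeight edgesWeight; rw [hE]; simp
  have hE'len : 2 ≤ E'.length := by
    have : (e :: E').length = c.length := by rw [← hE]; exact hlen
    simp at this; omega
  have h3 : (2:ℝ) ≤ (E'.length : ℝ) := by exact_mod_cast hE'len
  nlinarith

lemma flatten_map_rot_perm (r : List V → List V) :
    ∀ CC : List (List V), (∀ c ∈ CC, ∃ k : ℕ, r c = c.rotate k) →
      ((CC.map r).flatten).Perm CC.flatten := by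
  intro CC
  induction CC with
  | nil => intro _; simp
  | cons c CC ih =>
    intro h
    simp only [List.map_cons, List.flatten_cons]
    obtain ⟨k, hk⟩ := h c (List.mem_cons_self (a := c) (l := CC))
    exact ((hk ▸ List.rotate_perm c k).append (ih fun c hc => h c (List.mem_cons_of_mem _ hc)))

end Aux

/-- Removing the minimum-weight edge from each cycle of a 3-cycle cover (all cycles of length at
least 3) with nonnegative edge weights, and joining the resulting paths arbitrarily with
nonnegative-weight edges, yields a Hamiltonian path whose weight is at least two thirds of the
weight of the 3-cycle cover. -/
theorem stmt_10 {V : Type*} [Fintype V] [DecidableEq V]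
    (hn : 3 ≤ Fintype.card V)
    (w : V → V → ℝ) (hsymm : ∀ u v, w u v = w v u) (hw : ∀ u v, 0 ≤ w u v)
    (CC : List (List V)) (hCC : Is3CycleCover CC)
    (r : List V → List V) (hrot : ∀ c ∈ CC, ∃ k : ℕ, r c = c.rotate k)
    (hmin : ∀ c ∈ CC, ∀ e ∈ cycleEdges c,
      cycleWeight w c - w e.1 e.2 ≤ pathWeight w (r c))
    (L : List (List V)) (hL : L.Perm (CC.map r)) :
    IsHamList L.flatten ∧
    2 / 3 * (CC.map (cycleWeight w)).sum ≤ pathWeight w L.flatten := by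
  obtain ⟨hnd, hmem, h3⟩ := hCC
  have hperm : L.flatten.Perm CC.flatten :=
    hL.flatten.trans (flatten_map_rot_perm r CC hrot)
  refine ⟨⟨hperm.symm.nodup hnd, fun v => hperm.mem_iff.mpr (hmem v)⟩, ?_⟩
  have key : ∀ c ∈ CC, 2 / 3 * cycleWeight w c ≤ pathWeight w (r c) := by
    intro c hc
    obtain ⟨e, he, hsmall⟩ := exists_small_edge w hw c (h3 c hc)
    have := hmin c hc e he
    linarith
  calc 2 / 3 * (CC.map (cycleWeight w)).sum
      = (CC.map fun c => 2 / 3 * cycleWeight w c).sum := by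
        rw [List.sum_map_mul_left]
    _ ≤ (CC.map fun c => pathWeight w (r c)).sum := List.sum_le_sum key
    _ = (L.map (pathWeight w)).sum := by
        have : (List.map (fun c => pathWeight w (r c)) CC) = (CC.map r).map (pathWeight w) := by
          rw [List.map_map]; rfl
        rw [this]
        exact ((hL.map (pathWeight w)).sum_eq).symm
    _ ≤ pathWeight w L.flatten := pathWeight_flatten w hw L
end

section
/- In a complete weighted graph on n ≥ 2 vertices with nonnegative edge weights, the maximum weight of a matching is at most the maximum weight of a Hamiltonian path, and the maximum weight of a Hamiltonian path is at most twice the maximum weight of a matching; therefore the iterated-matching construction (patch max-weight matching edges into a Hamiltonian path) is a 1/2-approximation for the maximum-weight Hamiltonian path problem. -/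
section Aux
variable {V : Type*}

/-- Vertices of a list of edges, in interleaved order. -/
def mBind (M : List (V × V)) : List V := M.flatMap fun p => [p.1, p.2]

lemma mBind_cons (p : V × V) (M : List (V × V)) :
    mBind (p :: M) = p.1 :: p.2 :: mBind M := rfl

lemma mBind_perm (M : List (V × V)) :
    List.Perm (mBind M) (M.map Prod.fst ++ M.map Prod.snd) := by
  induction M with
  | nil => simp [mBind]
  | cons p M ih =>
    rw [mBind_cons]
    simp only [List.map_cons, List.cons_append]
    exact List.Perm.cons _ ((ih.cons p.2).trans List.perm_middle.symm)

lemma isMatchingList_iff (M : List (V × V)) : IsMatchingList M ↔ (mBind M).Nodup :=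
  ((mBind_perm M).nodup_iff).symm

lemma pathEdges_cons_cons (a b : V) (t : List V) :
    pathEdges (a :: b :: t) = (a, b) :: pathEdges (b :: t) := rfl

lemma pathEdges_sublist_cons (b : V) (t : List V) :
    (pathEdges t).Sublist (pathEdges (b :: t)) := by
  cases t with
  | nil => simp [pathEdges]
  | cons c t' => rw [pathEdges_cons_cons]; exact List.sublist_cons_self _ _

lemma edgesWeight_cons (w : V → V → ℝ) (p : V × V) (E : List (V × V)) :
    edgesWeight w (p :: E) = w p.1 p.2 + edgesWeight w E := by
  simp [edgesWeight]

lemma edgesWeight_le_of_sublist (w : V → V → ℝ) (hw : ∀ u v, 0 ≤ w u v)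
    {E1 E2 : List (V × V)} (h : E1.Sublist E2) :
    edgesWeight w E1 ≤ edgesWeight w E2 := by
  induction h with
  | slnil => exact le_refl _
  | cons p h ih => rw [edgesWeight_cons]; have := hw p.1 p.2; linarith
  | cons_cons p h ih => rw [edgesWeight_cons, edgesWeight_cons]; linarith

lemma edgesWeight_nonneg (w : V → V → ℝ) (hw : ∀ u v, 0 ≤ w u v) (E : List (V × V)) :
    0 ≤ edgesWeight w E := by
  have : edgesWeight w ([] : List (V × V)) = 0 := by simp [edgesWeight]
  rw [← this]
  exact edgesWeight_le_of_sublist w hw (List.nil_sublist E)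

/-- The matching edges appear as consecutive edges of `mBind M ++ R`. -/
lemma matching_sublist_pathEdges (M : List (V × V)) (R : List V) :
    M.Sublist (pathEdges (mBind M ++ R)) := by
  induction M with
  | nil => exact List.nil_sublist _
  | cons p M ih =>
    rw [mBind_cons]
    show (p :: M).Sublist (pathEdges (p.1 :: p.2 :: (mBind M ++ R)))
    rw [show pathEdges (p.1 :: p.2 :: (mBind M ++ R))
        = (p.1, p.2) :: pathEdges (p.2 :: (mBind M ++ R)) from rfl]
    have h2 : M.Sublist (pathEdges (p.2 :: (mBind M ++ R))) :=
      ih.trans (pathEdges_sublist_cons _ _)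
    have : ((p.1, p.2) : V × V) = p := rfl
    rw [← this]
    exact h2.cons₂ _

/-- Alternating matching: every other consecutive edge. -/
def evenMatch : List V → List (V × V)
  | a :: b :: t => (a, b) :: evenMatch t
  | _ => []

lemma two_step_ind {P : List V → Prop} (h0 : P []) (h1 : ∀ a, P [a])
    (h2 : ∀ a b t, P (b :: t) → P t → P (a :: b :: t)) : ∀ l, P l := by
  have key : ∀ n (l : List V), l.length ≤ n → P l := by
    intro n
    induction n with
    | zero =>
      intro l h
      have : l = [] := List.eq_nil_of_length_eq_zero (Nat.le_zero.mp h)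
      rw [this]; exact h0
    | succ n ih =>
      intro l h
      match l with
      | [] => exact h0
      | [a] => exact h1 a
      | a :: b :: t =>
        simp only [List.length_cons] at h
        exact h2 a b t (ih (b :: t) (by simp; omega)) (ih t (by omega))
  exact fun l => key l.length l le_rfl

lemma pathWeight_split (w : V → V → ℝ) : ∀ l : List V,
    pathWeight w l = edgesWeight w (evenMatch l) + edgesWeight w (evenMatch l.tail) := by
  refine two_step_ind ?_ ?_ ?_
  · simp [pathWeight, pathEdges, edgesWeight, evenMatch]
  · intro a; simp [pathWeight, pathEdges, edgesWeight, evenMatch]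
  · intro a b t ih1 _
    have hpw : pathWeight w (a :: b :: t) = w a b + pathWeight w (b :: t) := by
      rw [pathWeight, pathEdges_cons_cons, edgesWeight_cons]; rfl
    have he : evenMatch (a :: b :: t) = (a, b) :: evenMatch t := rfl
    rw [hpw, ih1, he, List.tail_cons, edgesWeight_cons]
    show w a b + (edgesWeight w (evenMatch (b :: t)) + edgesWeight w (evenMatch t))
      = w a b + edgesWeight w (evenMatch t) + edgesWeight w (evenMatch (b :: t))
    ring

lemma mBind_evenMatch_sublist : ∀ l : List V, (mBind (evenMatch l)).Sublist l := by
  refine two_step_ind ?_ ?_ ?_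
  · simp [evenMatch, mBind]
  · intro a; simp [evenMatch, mBind]
  · intro a b t _ ih2
    show (mBind ((a, b) :: evenMatch t)).Sublist (a :: b :: t)
    rw [mBind_cons]
    exact (ih2.cons₂ b).cons₂ a

lemma evenMatch_matching {l : List V} (hl : l.Nodup) : IsMatchingList (evenMatch l) := by
  rw [isMatchingList_iff]
  exact (mBind_evenMatch_sublist l).nodup hl

end Aux

/-- In a complete weighted graph on n ≥ 2 vertices with nonnegative edge weights: the maximum
weight of a matching is at most the maximum weight of a Hamiltonian path; the maximum weight of
a Hamiltonian path is at most twice the maximum weight of a matching; therefore patching the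
edges of a maximum-weight matching into a Hamiltonian path gives a 1/2-approximation for the
maximum-weight Hamiltonian path problem. -/
theorem stmt_12 {V : Type*} [Fintype V] [DecidableEq V]
    (hn : 2 ≤ Fintype.card V)
    (w : V → V → ℝ) (hsymm : ∀ u v, w u v = w v u) (hw : ∀ u v, 0 ≤ w u v) :
    (∀ M : List (V × V), IsMatchingList M →
      ∃ l : List V, IsHamList l ∧ edgesWeight w M ≤ pathWeight w l) ∧
    (∀ l : List V, IsHamList l →
      ∃ M : List (V × V), IsMatchingList M ∧ pathWeight w l ≤ 2 * edgesWeight w M) ∧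
    (∀ M : List (V × V), IsMatchingList M →
      (∀ M' : List (V × V), IsMatchingList M' → edgesWeight w M' ≤ edgesWeight w M) →
      ∃ l : List V, IsHamList l ∧
        (∀ e ∈ M, e ∈ pathEdges l ∨ (e.2, e.1) ∈ pathEdges l) ∧
        ∀ q : List V, IsHamList q → pathWeight w q ≤ 2 * pathWeight w l) := by
  -- Construction: extend a matching to a Hamiltonian list containing its edges.
  have extend : ∀ M : List (V × V), IsMatchingList M →
      ∃ l : List V, IsHamList l ∧ M.Sublist (pathEdges l) := by
    intro M hM
    set R : List V := (Finset.univ \ (mBind M).toFinset).toList with hR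
    refine ⟨mBind M ++ R, ⟨?_, ?_⟩, matching_sublist_pathEdges M R⟩
    · refine List.Nodup.append ((isMatchingList_iff M).mp hM) (Finset.nodup_toList _) ?_
      intro x hx hxR
      rw [hR, Finset.mem_toList, Finset.mem_sdiff, List.mem_toFinset] at hxR
      exact hxR.2 hx
    · intro v
      by_cases hv : v ∈ mBind M
      · exact List.mem_append_left _ hv
      · refine List.mem_append_right _ ?_
        rw [hR, Finset.mem_toList, Finset.mem_sdiff, List.mem_toFinset]
        exact ⟨Finset.mem_univ v, hv⟩
  have part2 : ∀ l : List V, IsHamList l →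
      ∃ M : List (V × V), IsMatchingList M ∧ pathWeight w l ≤ 2 * edgesWeight w M := by
    intro l hl
    have hsplit := pathWeight_split w l
    have h1 : IsMatchingList (evenMatch l) := evenMatch_matching hl.1
    have h2 : IsMatchingList (evenMatch l.tail) := evenMatch_matching hl.1.tail
    rcases le_total (edgesWeight w (evenMatch l)) (edgesWeight w (evenMatch l.tail)) with h | h
    · exact ⟨evenMatch l.tail, h2, by linarith⟩
    · exact ⟨evenMatch l, h1, by linarith⟩
  refine ⟨?_, part2, ?_⟩
  · intro M hM
    obtain ⟨l, hHam, hsub⟩ := extend M hM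
    exact ⟨l, hHam, edgesWeight_le_of_sublist w hw hsub⟩
  · intro M hM hmax
    obtain ⟨l, hHam, hsub⟩ := extend M hM
    refine ⟨l, hHam, fun e he => Or.inl (hsub.subset he), ?_⟩
    intro q hq
    obtain ⟨M', hM', hle⟩ := part2 q hq
    have h1 : edgesWeight w M' ≤ edgesWeight w M := hmax M' hM'
    have h2 : edgesWeight w M ≤ pathWeight w l := edgesWeight_le_of_sublist w hw hsub
    linarith
end
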